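/- arXiv:math/0501515 — 2 statements merged into one kernel-verified Lean document; each statement's English description precedes it below -/
import Mathlib

section
/- Every filtered λ-ring structure ψ on ℤ[x]/(x²) satisfies ψ_p(x) = b_p x for a unique sequence of integers (b_p) indexed by the primes, and this sequence satisfies b_p ≡ 0 (mod p) for every prime p. Conversely, for any sequence of integers (b_p) with b_p ≡ 0 (mod p) for all primes p, setting ψ_p(x) = b_p x defines a filtered λ-ring structure on ℤ[x]/(x²). Two such structures, given by sequences (b_p) and (b'_p), are isomorphic if and only if b_p = b'_p for all primes p. (Hence isomorphism classes of filtered λ-ring structures on ℤ[x]/(x²) are in bijection with sequences (b_p) with p ∣ b_p for all p.) -/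
/-!
As an abelian group `ℤ[x]/(x²)` is free on `1, x`, and since `x² = 0` every endomorphism
preserving `(x)` sends `x` to `b x`. At `x` the Frobenius congruence reads `b x ≡ 0 (mod p)`,
i.e. `p ∣ b`. Conversely the dilations `x ↦ b x` commute, and when `p ∣ b` the congruence holds
on every `c + d x` because `(c + d x)^p ≡ c^p ≡ c (mod p)`. An isomorphism `σ` sends `x` to
`d x` with `d ≠ 0`, and intertwining the Adams operations at `x` gives `b_p d = b'_p d`.
-/

open Polynomial

noncomputable section

/-- The truncated polynomial ring `ℤ[x]/(xⁿ)`. -/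
abbrev TP (n : ℕ) : Type := Polynomial ℤ ⧸ Ideal.span {(X : Polynomial ℤ) ^ n}

/-- The class of `x` in `ℤ[x]/(xⁿ)`. -/
def xx (n : ℕ) : TP n := Ideal.Quotient.mk _ (X : Polynomial ℤ)

/-- A filtered λ-ring structure on `ℤ[x]/(xⁿ)`, presented (via Wilkerson's theorem) as a
family of Adams operations `ψ p`, indexed by the primes `p`: each `ψ p` is a ring
endomorphism preserving the filtration ideal `(x)`, they pairwise commute, and
`ψ p r ≡ r ^ p (mod p)`. -/
structure AdamsFamily (n : ℕ) : Type where
  ψ : Nat.Primes → (TP n →+* TP n)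
  maps_ideal : ∀ (p : Nat.Primes), ∀ a ∈ Ideal.span {xx n}, ψ p a ∈ Ideal.span {xx n}
  comm : ∀ p q : Nat.Primes, (ψ p).comp (ψ q) = (ψ q).comp (ψ p)
  frob : ∀ (p : Nat.Primes) (a : TP n),
    ψ p a - a ^ (p : ℕ) ∈ Ideal.span {((p : ℕ) : TP n)}

/-- Isomorphism of filtered λ-ring structures on `ℤ[x]/(xⁿ)`: a filtration-preserving ring
automorphism intertwining the Adams operations. -/
def AdamsIso {n : ℕ} (R S : AdamsFamily n) : Prop :=
  ∃ σ : TP n ≃+* TP n,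
    (Ideal.span {xx n}).map σ.toRingHom = Ideal.span {xx n} ∧
    ∀ p : Nat.Primes, σ.toRingHom.comp (R.ψ p) = (S.ψ p).comp σ.toRingHom

/-- The prime 2 as an element of `Nat.Primes`. -/
def P2 : Nat.Primes := ⟨2, Nat.prime_two⟩

/-- The prime 3 as an element of `Nat.Primes`. -/
def P3 : Nat.Primes := ⟨3, Nat.prime_three⟩

namespace TP

variable {n : ℕ}

theorem xx_pow_self : xx n ^ n = 0 := by
  rw [xx, ← map_pow, Ideal.Quotient.eq_zero_iff_mem]
  exact Ideal.mem_span_singleton_self _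

theorem ringHom_ext {S : Type*} [Ring S] {f g : TP n →+* S} (h : f (xx n) = g (xx n)) :
    f = g :=
  Ideal.Quotient.ringHom_ext (Polynomial.ringHom_ext' (RingHom.ext_int _ _) h)

def lift {S : Type*} [CommRing S] (s : S) (hs : s ^ n = 0) : TP n →+* S :=
  Ideal.Quotient.lift _ (eval₂RingHom (Int.castRingHom S) s) fun a ha ↦ by
    obtain ⟨c, rfl⟩ := Ideal.mem_span_singleton'.mp ha
    simp [hs]

@[simp]
theorem lift_xx {S : Type*} [CommRing S] (s : S) (hs : s ^ n = 0) : lift s hs (xx n) = s := by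
  simp [lift, xx]

theorem xx_pow_of_le {m : ℕ} (h : n ≤ m) : xx n ^ m = 0 :=
  pow_eq_zero_of_le h xx_pow_self

def dilation (b : ℤ) : TP n →+* TP n :=
  lift (b * xx n) (by rw [mul_pow, xx_pow_self, mul_zero])

@[simp]
theorem dilation_xx (b : ℤ) : dilation b (xx n) = b * xx n :=
  lift_xx _ _

theorem exists_eq_intCast_add_mul_xx (a : TP 2) : ∃ c d : ℤ, a = c + d * xx 2 := by
  obtain ⟨f, rfl⟩ := Ideal.Quotient.mk_surjective a
  refine ⟨f.coeff 0, f.coeff 1, ?_⟩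
  have : f - (C (f.coeff 0) + C (f.coeff 1) * X) ∈ Ideal.span {(X : ℤ[X]) ^ 2} := by
    rw [Ideal.mem_span_singleton, X_pow_dvd_iff]
    intro i hi
    interval_cases i <;> simp [-eq_intCast, coeff_C]
  simpa [xx] using Ideal.Quotient.eq.mpr this

open DualNumber in
/-- In fact an isomorphism; `TrivSqZeroExt.snd` reads off the coefficient of `x`. -/
def toDualNumber : TP 2 →+* ℤ[ε] :=
  lift ε (by rw [sq, eps_mul_eps])

open DualNumber in
@[simp]
theorem toDualNumber_xx : toDualNumber (xx 2) = ε :=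
  lift_xx _ _

theorem intCast_mul_xx_injective : Function.Injective fun c : ℤ ↦ (c : TP 2) * xx 2 :=
  fun c d h ↦ by simpa using congrArg (fun a ↦ (toDualNumber a).snd) h

theorem xx_ne_zero : xx 2 ≠ 0 := fun h ↦ one_ne_zero <|
  intCast_mul_xx_injective (a₁ := 1) (a₂ := 0) (by simp [h])

theorem exists_eq_intCast_mul_xx_of_mem {a : TP 2} (ha : a ∈ Ideal.span {xx 2}) :
    ∃ c : ℤ, a = c * xx 2 := by
  obtain ⟨t, rfl⟩ := Ideal.mem_span_singleton'.mp ha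
  obtain ⟨c, d, rfl⟩ := exists_eq_intCast_add_mul_xx t
  exact ⟨c, by linear_combination (d : TP 2) * xx_pow_self⟩

theorem dvd_of_intCast_mul_xx_mem {p : ℕ} {b : ℤ}
    (h : (b : TP 2) * xx 2 ∈ Ideal.span {(p : TP 2)}) : (p : ℤ) ∣ b := by
  obtain ⟨t, ht⟩ := Ideal.mem_span_singleton'.mp h
  exact ⟨(toDualNumber t).snd,
    by simpa [mul_comm] using congrArg (fun a ↦ (toDualNumber a).snd) ht.symm⟩

theorem dilation_sub_pow_mem {p : ℕ} (hp : p.Prime) {b : ℤ} (hb : (p : ℤ) ∣ b) (a : TP 2) :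
    dilation b a - a ^ p ∈ Ideal.span {(p : TP 2)} := by
  obtain ⟨c, d, rfl⟩ := exists_eq_intCast_add_mul_xx a
  obtain ⟨r, hr⟩ := exists_add_pow_prime_eq hp (c : TP 2) (d * xx 2)
  obtain ⟨e, he⟩ := (Int.ModEq.pow_prime_eq_self hp c).dvd
  obtain ⟨k, rfl⟩ := hb
  have hdx : ((d : TP 2) * xx 2) ^ p = 0 := by rw [mul_pow, xx_pow_of_le hp.two_le, mul_zero]
  refine Ideal.mem_span_singleton'.mpr ⟨e + (d * k - c * d * r) * xx 2, ?_⟩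
  simp only [map_add, map_mul, map_intCast, dilation_xx, hr, hdx]
  have he' := congrArg (Int.cast : ℤ → TP 2) he
  push_cast at he'
  push_cast
  linear_combination -he'

end TP

namespace AdamsFamily

theorem exists_psi_xx_eq (R : AdamsFamily 2) (p : Nat.Primes) :
    ∃ c : ℤ, R.ψ p (xx 2) = c * xx 2 :=
  TP.exists_eq_intCast_mul_xx_of_mem (R.maps_ideal p _ (Ideal.mem_span_singleton_self _))

theorem dvd_of_psi_xx_eq {R : AdamsFamily 2} {p : Nat.Primes} {b : ℤ}
    (h : R.ψ p (xx 2) = b * xx 2) : ((p : ℕ) : ℤ) ∣ b := by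
  have hfrob := R.frob p (xx 2)
  rw [h, TP.xx_pow_of_le p.prop.two_le, sub_zero] at hfrob
  exact TP.dvd_of_intCast_mul_xx_mem hfrob

theorem psi_eq_dilation {R : AdamsFamily 2} {p : Nat.Primes} {b : ℤ}
    (h : R.ψ p (xx 2) = b * xx 2) : R.ψ p = TP.dilation b :=
  TP.ringHom_ext (by rw [h, TP.dilation_xx])

def ofDvd (b : Nat.Primes → ℤ) (hb : ∀ p : Nat.Primes, ((p : ℕ) : ℤ) ∣ b p) :
    AdamsFamily 2 where
  ψ p := TP.dilation (b p)
  maps_ideal p a ha := by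
    obtain ⟨t, rfl⟩ := Ideal.mem_span_singleton'.mp ha
    rw [map_mul, TP.dilation_xx, ← mul_assoc]
    exact Ideal.mul_mem_left _ _ (Ideal.mem_span_singleton_self _)
  comm p q := TP.ringHom_ext (by simp [mul_left_comm])
  frob p := TP.dilation_sub_pow_mem p.prop (hb p)

theorem ofDvd_psi_xx (b : Nat.Primes → ℤ) (hb : ∀ p : Nat.Primes, ((p : ℕ) : ℤ) ∣ b p)
    (p : Nat.Primes) : (ofDvd b hb).ψ p (xx 2) = b p * xx 2 :=
  TP.dilation_xx _

theorem adamsIso_iff {R S : AdamsFamily 2} {b b' : Nat.Primes → ℤ}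
    (hb : ∀ p : Nat.Primes, R.ψ p (xx 2) = b p * xx 2)
    (hb' : ∀ p : Nat.Primes, S.ψ p (xx 2) = b' p * xx 2) :
    AdamsIso R S ↔ ∀ p : Nat.Primes, b p = b' p := by
  constructor
  · rintro ⟨σ, hσ, hcomm⟩ p
    obtain ⟨d, hd⟩ : ∃ d : ℤ, σ (xx 2) = d * xx 2 := TP.exists_eq_intCast_mul_xx_of_mem <| by
      rw [← hσ]
      exact Ideal.mem_map_of_mem _ (Ideal.mem_span_singleton_self _)
    have hd0 : d ≠ 0 := by
      rintro rfl
      exact TP.xx_ne_zero (σ.injective (by simpa using hd))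
    have hconj := RingHom.congr_fun (hcomm p) (xx 2)
    simp only [RingHom.comp_apply, RingEquiv.toRingHom_eq_coe, RingHom.coe_coe, hb, hb',
      map_mul, map_intCast, hd] at hconj
    refine mul_right_cancel₀ hd0 (TP.intCast_mul_xx_injective ?_)
    push_cast
    linear_combination hconj
  · intro hbb
    refine ⟨RingEquiv.refl _, by simp, fun p ↦ ?_⟩
    rw [psi_eq_dilation (hb p), psi_eq_dilation (hb' p), hbb p]
    rfl

end AdamsFamily

theorem stmt1 :
    (∀ R : AdamsFamily 2, ∃! b : Nat.Primes → ℤ,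
        ∀ p : Nat.Primes, R.ψ p (xx 2) = (b p : TP 2) * xx 2) ∧
    (∀ (R : AdamsFamily 2) (b : Nat.Primes → ℤ),
        (∀ p : Nat.Primes, R.ψ p (xx 2) = (b p : TP 2) * xx 2) →
        ∀ p : Nat.Primes, ((p : ℕ) : ℤ) ∣ b p) ∧
    (∀ b : Nat.Primes → ℤ, (∀ p : Nat.Primes, ((p : ℕ) : ℤ) ∣ b p) →
        ∃ S : AdamsFamily 2, ∀ p : Nat.Primes, S.ψ p (xx 2) = (b p : TP 2) * xx 2) ∧
    (∀ (R S : AdamsFamily 2) (b b' : Nat.Primes → ℤ),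
        (∀ p : Nat.Primes, R.ψ p (xx 2) = (b p : TP 2) * xx 2) →
        (∀ p : Nat.Primes, S.ψ p (xx 2) = (b' p : TP 2) * xx 2) →
        (AdamsIso R S ↔ ∀ p : Nat.Primes, b p = b' p)) :=
  ⟨fun R ↦ existsUnique_of_exists_of_unique (Classical.skolem.mp R.exists_psi_xx_eq)
      fun _ _ hb hb' ↦ funext fun p ↦ TP.intCast_mul_xx_injective ((hb p).symm.trans (hb' p)),
    fun _ _ hb p ↦ AdamsFamily.dvd_of_psi_xx_eq (hb p),
    fun b hb ↦ ⟨AdamsFamily.ofDvd b hb, AdamsFamily.ofDvd_psi_xx b hb⟩,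
    fun _ _ _ _ ↦ AdamsFamily.adamsIso_iff⟩
end
end

section
/- Let (b_p) and (c_p) be sequences of integers indexed by the primes satisfying: (1) b_p ≡ 0 (mod p) for all primes p; (2) c₂ ≡ 1 (mod 2) and c_p ≡ 0 (mod p) for all primes p > 2; (3) (b_q² − b_q)·c_p = (b_p² − b_p)·c_q for all primes p and q. If b₂ ≠ 0, then b_p(b_p − 1) ≡ 0 (mod 2^{θ₂(b₂)}) for every odd prime p. If b₂ = 0, then b_p = 0 for every odd prime p. -/
open Polynomial

noncomputable section

/-!
Condition (3) with `q = 2` reads `(b_p² - b_p) c₂ = (b₂² - b₂) c_p`, where `c₂` is odd.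
The right side is divisible by every power of 2 dividing `b₂`, and since `c₂` is a unit modulo
powers of 2, so is `b_p (b_p - 1)`. If `b₂ = 0`, then `b_p` is idempotent, hence `0` or `1`,
and `p ∣ b_p` rules out `1`.
-/

theorem dvd_mul_sub_one_of_sq_sub_self_mul_eq {R : Type*} [CommRing R] {x a b m n : R}
    (hxa : x ∣ a) (hxn : IsCoprime x n) (h : (b ^ 2 - b) * n = (a ^ 2 - a) * m) :
    x ∣ b * (b - 1) := by
  have hx : x ∣ (b ^ 2 - b) * n := by
    rw [h, sq]
    exact ((dvd_mul_of_dvd_right hxa a).sub hxa).mul_right m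
  rw [sq, ← mul_sub_one] at hx
  exact hxn.dvd_of_dvd_mul_right hx

theorem eq_zero_of_sq_sub_self_eq_zero_of_dvd {R : Type*} [CommRing R] [IsDomain R] {d b : R}
    (hd : ¬IsUnit d) (hdb : d ∣ b) (hb : b ^ 2 - b = 0) : b = 0 := by
  have hidem : IsIdempotentElem b := by
    rw [IsIdempotentElem, ← sq]
    exact sub_eq_zero.mp hb
  refine (IsIdempotentElem.iff_eq_zero_or_one.mp hidem).resolve_right ?_
  rintro rfl
  exact hd (isUnit_of_dvd_one hdb)

theorem stmt3_general (b c : Nat.Primes → ℤ)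
    (h1 : ∀ p : Nat.Primes, ((p : ℕ) : ℤ) ∣ b p)
    (h2 : Int.ModEq 2 (c P2) 1)
    (h3 : ∀ p q : Nat.Primes, (b q ^ 2 - b q) * c p = (b p ^ 2 - b p) * c q) :
    (b P2 ≠ 0 → ∀ p : Nat.Primes, 2 < (p : ℕ) →
        (2 : ℤ) ^ padicValInt 2 (b P2) ∣ b p * (b p - 1)) ∧
    (b P2 = 0 → ∀ p : Nat.Primes, 2 < (p : ℕ) → b p = 0) := by
  have hc : Odd (c P2) := Int.odd_iff.mpr h2
  refine ⟨fun _ p _ => ?_, fun hb2 p _ => ?_⟩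
  · exact dvd_mul_sub_one_of_sq_sub_self_mul_eq (padicValInt_dvd _)
      (Int.isCoprime_two_left.mpr hc).pow_left (h3 P2 p)
  · have h : (b p ^ 2 - b p) * c P2 = 0 := by rw [h3 P2 p, hb2]; ring
    exact eq_zero_of_sq_sub_self_eq_zero_of_dvd (Nat.prime_iff_prime_int.mp p.prop).not_isUnit
      (h1 p) ((mul_eq_zero.mp h).resolve_right fun h0 => Int.not_odd_zero (h0 ▸ hc))

theorem stmt3 (b c : Nat.Primes → ℤ)
    (h1 : ∀ p : Nat.Primes, ((p : ℕ) : ℤ) ∣ b p)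
    (h2 : Int.ModEq 2 (c P2) 1)
    (h2' : ∀ p : Nat.Primes, 2 < (p : ℕ) → ((p : ℕ) : ℤ) ∣ c p)
    (h3 : ∀ p q : Nat.Primes, (b q ^ 2 - b q) * c p = (b p ^ 2 - b p) * c q) :
    (b P2 ≠ 0 → ∀ p : Nat.Primes, 2 < (p : ℕ) →
        (2 : ℤ) ^ padicValInt 2 (b P2) ∣ b p * (b p - 1)) ∧
    (b P2 = 0 → ∀ p : Nat.Primes, 2 < (p : ℕ) → b p = 0) :=
  stmt3_general b c h1 h2 h3
end
end
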